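/- Let r = √2/3 and μ(x) = 2x/(1 + x²/r²). Then μ maps the open disc D_r = {x ∈ ℂ : |x| < r} bijectively onto V = ℂ \ {μ ∈ ℂ : μ² ∈ [r², ∞)}. -/

import Mathlib

/-!
Put `w = (x² - r²) / (x² + r²)`, the Cayley transform of `x² / r²`. Then `μ(x) = x (1 - w)` and
`μ(x)² = r² (1 - w²)`; moreover `‖x‖ < r` exactly when `Re w < 0`, while `μ²` lies in `[r², ∞)`
exactly when `w` is purely imaginary. Hence the inverse map sends `μ` to `μ / (1 - w)`, where `w`
is the square root of `1 - μ² / r²` in the open left half-plane; such a root exists precisely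
when `μ² ∉ [r², ∞)`.
-/

open Complex Metric

theorem re_sub_div_add (u v : ℂ) :
    ((u - v) / (u + v)).re = (normSq u - normSq v) / normSq (u + v) := by
  rw [div_re, ← add_div]
  congr 1
  simp only [sub_re, add_re, sub_im, add_im, normSq_apply]
  ring

theorem re_sub_div_add_neg_iff {u v : ℂ} (h : u + v ≠ 0) :
    ((u - v) / (u + v)).re < 0 ↔ ‖u‖ < ‖v‖ := by
  rw [re_sub_div_add, div_lt_iff₀ (normSq_pos.mpr h), zero_mul, sub_neg,
    ← Complex.sq_norm u, ← Complex.sq_norm v]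
  exact sq_lt_sq₀ (norm_nonneg u) (norm_nonneg v)

theorem re_eq_zero_iff_exists_sq_eq_ofReal_nonpos (w : ℂ) :
    w.re = 0 ↔ ∃ s : ℝ, s ≤ 0 ∧ w ^ 2 = s := by
  constructor
  · intro h
    refine ⟨-w.im ^ 2, by nlinarith, ?_⟩
    apply Complex.ext <;> simp [sq, h]
  · rintro ⟨s, hs, hw⟩
    have hre := congrArg re hw
    have him := congrArg im hw
    simp only [sq, mul_re, mul_im, ofReal_re, ofReal_im] at hre him
    by_contra h
    have him0 : w.im = 0 := by
      have : 2 * w.re * w.im = 0 := by linarith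
      simpa [h] using this
    nlinarith [sq_pos_of_ne_zero h]

theorem eq_of_sq_eq_of_re_neg {a b : ℂ} (h : a ^ 2 = b ^ 2) (ha : a.re < 0) (hb : b.re < 0) :
    a = b := by
  rcases sq_eq_sq_iff_eq_or_eq_neg.mp h with h | h
  · exact h
  · rw [h, neg_re] at ha
    linarith

theorem ne_one_of_re_neg {w : ℂ} (hw : w.re < 0) : w ≠ 1 := by
  rintro rfl
  norm_num at hw

theorem exists_sq_eq_re_neg {s : ℂ} (hs : s.re ≠ 0) : ∃ w : ℂ, w ^ 2 = s ^ 2 ∧ w.re < 0 := by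
  rcases hs.lt_or_gt with h | h
  · exact ⟨s, rfl, h⟩
  · exact ⟨-s, neg_sq s, by simpa using h⟩

section

variable {r : ℝ}

noncomputable def recipJoukowski (r : ℝ) (x : ℂ) : ℂ := 2 * x / (1 + x ^ 2 / (r : ℂ) ^ 2)

noncomputable def cayleySq (r : ℝ) (x : ℂ) : ℂ := (x ^ 2 - (r : ℂ) ^ 2) / (x ^ 2 + (r : ℂ) ^ 2)

theorem sq_add_sq_ne_zero_of_norm_lt {x : ℂ} (hx : ‖x‖ < r) : x ^ 2 + (r : ℂ) ^ 2 ≠ 0 := by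
  intro h
  have : ‖x ^ 2‖ = ‖(r : ℂ) ^ 2‖ := by rw [eq_neg_of_add_eq_zero_left h, norm_neg]
  rw [norm_pow, norm_pow, norm_real, Real.norm_eq_abs, sq_abs] at this
  nlinarith [norm_nonneg x]

theorem re_cayleySq_neg_iff (hr : 0 ≤ r) {x : ℂ} (hx : x ^ 2 + (r : ℂ) ^ 2 ≠ 0) :
    (cayleySq r x).re < 0 ↔ ‖x‖ < r := by
  rw [cayleySq, re_sub_div_add_neg_iff hx, norm_pow, norm_pow, norm_real, Real.norm_of_nonneg hr]
  exact pow_lt_pow_iff_left₀ (norm_nonneg x) hr two_ne_zero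

theorem recipJoukowski_eq_div (hr : r ≠ 0) (x : ℂ) :
    recipJoukowski r x = 2 * r ^ 2 * x / (x ^ 2 + r ^ 2) := by
  have : (r : ℂ) ≠ 0 := ofReal_ne_zero.mpr hr
  rw [recipJoukowski, one_add_div (pow_ne_zero 2 this), div_div_eq_mul_div]
  ring

theorem recipJoukowski_eq (hr : r ≠ 0) {x : ℂ} (hx : x ^ 2 + (r : ℂ) ^ 2 ≠ 0) :
    recipJoukowski r x = x * (1 - cayleySq r x) := by
  have : (r : ℂ) ≠ 0 := ofReal_ne_zero.mpr hr
  rw [recipJoukowski_eq_div hr, cayleySq]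
  field_simp
  ring

theorem recipJoukowski_sq (hr : r ≠ 0) {x : ℂ} (hx : x ^ 2 + (r : ℂ) ^ 2 ≠ 0) :
    recipJoukowski r x ^ 2 = r ^ 2 * (1 - cayleySq r x ^ 2) := by
  have : (r : ℂ) ≠ 0 := ofReal_ne_zero.mpr hr
  rw [recipJoukowski_eq_div hr, cayleySq]
  field_simp
  ring

theorem sq_mem_slit_iff (hr : r ≠ 0) {μ w : ℂ} (hw : μ ^ 2 = r ^ 2 * (1 - w ^ 2)) :
    (∃ t : ℝ, r ^ 2 ≤ t ∧ μ ^ 2 = t) ↔ w.re = 0 := by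
  have : (r : ℂ) ≠ 0 := ofReal_ne_zero.mpr hr
  rw [re_eq_zero_iff_exists_sq_eq_ofReal_nonpos]
  constructor
  · rintro ⟨t, ht, hμ⟩
    refine ⟨1 - t / r ^ 2, ?_, ?_⟩
    · rw [sub_nonpos, one_le_div (by positivity)]
      exact ht
    · push_cast
      field_simp
      linear_combination hw - hμ
  · rintro ⟨s, hs, hws⟩
    refine ⟨r ^ 2 * (1 - s), by nlinarith [sq_nonneg r], ?_⟩
    rw [hw, hws]
    push_cast
    ring

theorem cayleySq_div_one_sub (hr : r ≠ 0) {μ w : ℂ} (hw1 : w ≠ 1)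
    (hw : μ ^ 2 = r ^ 2 * (1 - w ^ 2)) :
    (μ / (1 - w)) ^ 2 + (r : ℂ) ^ 2 ≠ 0 ∧ cayleySq r (μ / (1 - w)) = w := by
  have : (r : ℂ) ≠ 0 := ofReal_ne_zero.mpr hr
  have h1w : 1 - w ≠ 0 := sub_ne_zero.mpr hw1.symm
  have hsum : (μ / (1 - w)) ^ 2 + (r : ℂ) ^ 2 = 2 * r ^ 2 / (1 - w) := by
    field_simp
    linear_combination hw
  refine ⟨by rw [hsum]; simp [this, h1w], ?_⟩
  rw [cayleySq, hsum]
  field_simp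
  linear_combination hw

theorem recipJoukowski_mapsTo (hr : 0 < r) :
    Set.MapsTo (recipJoukowski r) (ball 0 r) {μ | ¬ ∃ t : ℝ, r ^ 2 ≤ t ∧ μ ^ 2 = t} := by
  intro x hx
  rw [mem_ball_zero_iff] at hx
  have hx0 := sq_add_sq_ne_zero_of_norm_lt hx
  rw [Set.mem_ofPred_eq, sq_mem_slit_iff hr.ne' (recipJoukowski_sq hr.ne' hx0)]
  exact ((re_cayleySq_neg_iff hr.le hx0).mpr hx).ne

theorem recipJoukowski_injOn (hr : 0 < r) : Set.InjOn (recipJoukowski r) (ball 0 r) := by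
  intro x hx y hy hxy
  rw [mem_ball_zero_iff] at hx hy
  have hx0 := sq_add_sq_ne_zero_of_norm_lt hx
  have hy0 := sq_add_sq_ne_zero_of_norm_lt hy
  have hxw := (re_cayleySq_neg_iff hr.le hx0).mpr hx
  have hyw := (re_cayleySq_neg_iff hr.le hy0).mpr hy
  have hw : cayleySq r x = cayleySq r y := by
    have hr2 : (r : ℂ) ^ 2 ≠ 0 := pow_ne_zero 2 (ofReal_ne_zero.mpr hr.ne')
    have hsq := congrArg (· ^ 2) hxy
    rw [recipJoukowski_sq hr.ne' hx0, recipJoukowski_sq hr.ne' hy0,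
      mul_right_inj' hr2, sub_right_inj] at hsq
    exact eq_of_sq_eq_of_re_neg hsq hxw hyw
  have h1w : 1 - cayleySq r x ≠ 0 := sub_ne_zero.mpr (ne_one_of_re_neg hxw).symm
  rw [recipJoukowski_eq hr.ne' hx0, recipJoukowski_eq hr.ne' hy0, ← hw] at hxy
  exact mul_right_cancel₀ h1w hxy

theorem recipJoukowski_surjOn (hr : 0 < r) :
    Set.SurjOn (recipJoukowski r) (ball 0 r) {μ | ¬ ∃ t : ℝ, r ^ 2 ≤ t ∧ μ ^ 2 = t} := by
  intro μ hμ
  have hr0 : (r : ℂ) ≠ 0 := ofReal_ne_zero.mpr hr.ne'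
  obtain ⟨s, hs⟩ := IsAlgClosed.exists_pow_nat_eq (1 - μ ^ 2 / (r : ℂ) ^ 2) two_pos
  have hμs : μ ^ 2 = r ^ 2 * (1 - s ^ 2) := by
    rw [hs]
    field_simp
    ring
  obtain ⟨w, hws, hw⟩ := exists_sq_eq_re_neg (mt (sq_mem_slit_iff hr.ne' hμs).mpr hμ)
  rw [← hws] at hμs
  have hw1 := ne_one_of_re_neg hw
  obtain ⟨hx0, hxw⟩ := cayleySq_div_one_sub hr.ne' hw1 hμs
  refine ⟨μ / (1 - w), mem_ball_zero_iff.mpr ((re_cayleySq_neg_iff hr.le hx0).mp (by rwa [hxw])), ?_⟩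
  rw [recipJoukowski_eq hr.ne' hx0, hxw, div_mul_cancel₀ _ (sub_ne_zero.mpr hw1.symm)]

theorem recipJoukowski_bijOn (hr : 0 < r) :
    Set.BijOn (recipJoukowski r) (ball 0 r) {μ | ¬ ∃ t : ℝ, r ^ 2 ≤ t ∧ μ ^ 2 = t} :=
  ⟨recipJoukowski_mapsTo hr, recipJoukowski_injOn hr, recipJoukowski_surjOn hr⟩

end

theorem stmt_4 (r : ℝ) (hr : r = Real.sqrt 2 / 3) :
    Set.BijOn (fun x : ℂ => 2 * x / (1 + x ^ 2 / (r : ℂ) ^ 2))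
      (ball (0 : ℂ) r)
      {μ : ℂ | ¬ ∃ t : ℝ, r ^ 2 ≤ t ∧ μ ^ 2 = (t : ℂ)} :=
  recipJoukowski_bijOn (by rw [hr]; positivity)
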